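/- arXiv:2005.01249 — 2 statements merged into one kernel-verified Lean document; each statement's English description precedes it below -/
import Mathlib

section
/- Let m > 0, 0 < r₀ < 2m, and θ ∈ (0, π). Let g = diag(2m/r₀ − 1, r₀², r₀² sin²θ) and k = diag(m r₀⁻²(2m/r₀−1)^{1/2}, −r₀(2m/r₀−1)^{1/2}, −r₀ sin²θ (2m/r₀−1)^{1/2}). For a ∈ ℝ define g(a) = g + a·C_g and k(a) = k + a·C_k, where C_g is the symmetric 3×3 matrix whose only nonzero entries are its (1,3) and (3,1) entries, both equal to −2 m r₀⁻¹ sin²θ, and C_k is the symmetric 3×3 matrix whose only nonzero entries are its (1,3) and (3,1) entries, both equal to −m r₀⁻² sin²θ (2m/r₀−1)^{1/2}. Set π(a) = g(a)⁻¹ k(a) g(a)⁻¹ − tr(g(a)⁻¹ k(a))·g(a)⁻¹, defined for a near 0. Then the function a ↦ tr(g(a)⁻¹ k(a)) has derivative 0 at a = 0, and the function a ↦ (π(a))₁₃ (the (t,φ) entry of π(a)) has derivative m·r₀⁻⁴·(2m/r₀ − 1)^{−1/2} at a = 0; in particular this derivative is independent of θ. -/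
/-!
Along a line `a ↦ G + a • C` through an invertible matrix, `(G + a • C)⁻¹` has derivative
`-G⁻¹ C G⁻¹` at `a = 0`, so the product rule differentiates `tr(g⁻¹k)` and the momentum
`π = g⁻¹kg⁻¹ − tr(g⁻¹k) g⁻¹` explicitly. For diagonal background data perturbed only in the
`(t,φ)` entries by `c` (metric) and `d` (second fundamental form), every term of the derivative
of `g⁻¹k` is off-diagonal, so its trace is stationary; in the `(t,φ)` entry of `π'` the
contributions of `k_tt` and `k_φφ` cancel against `tr(g⁻¹k)`, leaving
`(d + c k_θθ / g_θθ) / (g_tt g_φφ)`.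
-/

open Real Matrix

theorem HasDerivAt.matrix_apply {𝕜 : Type*} [NontriviallyNormedField 𝕜] {m n : Type*}
    [Fintype m] [Fintype n] {f : 𝕜 → Matrix m n 𝕜} {f' : Matrix m n 𝕜} {x : 𝕜}
    (hf : HasDerivAt f f' x) (i : m) (j : n) : HasDerivAt (fun a => f a i j) (f' i j) x :=
  hasDerivAt_pi.1 (hasDerivAt_pi.1 hf i) j

theorem HasDerivAt.matrix_trace {𝕜 : Type*} [NontriviallyNormedField 𝕜] {n : Type*}
    [Fintype n] {f : 𝕜 → Matrix n n 𝕜} {f' : Matrix n n 𝕜} {x : 𝕜}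
    (hf : HasDerivAt f f' x) : HasDerivAt (fun a => (f a).trace) f'.trace x := by
  simpa only [trace, diag] using HasDerivAt.fun_sum fun i _ => hf.matrix_apply i i

namespace Matrix

variable {n : Type*} [Fintype n] [DecidableEq n]

noncomputable def momentum {K : Type*} [Field K] (g k : Matrix n n K) : Matrix n n K :=
  g⁻¹ * k * g⁻¹ - (g⁻¹ * k).trace • g⁻¹

theorem inv_diagonal_of_ne_zero {K : Type*} [Field K] {v : n → K} (hv : ∀ i, v i ≠ 0) :
    (diagonal v)⁻¹ = diagonal v⁻¹ :=
  inv_eq_left_inv (by rw [diagonal_mul_diagonal, ← diagonal_one]; congr 1; ext i; simp [hv i])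

theorem isUnit_det_diagonal {K : Type*} [Field K] {v : n → K} (hv : ∀ i, v i ≠ 0) :
    IsUnit (diagonal v).det := by
  simp [det_diagonal, Finset.prod_ne_zero_iff, hv]

variable {𝕜 : Type*} [NontriviallyNormedField 𝕜] [CompleteSpace 𝕜]

section LineDerivatives

attribute [local instance] Matrix.linftyOpNormedRing Matrix.linftyOpNormedAlgebra

variable {G : Matrix n n 𝕜}

theorem hasDerivAt_inv_add_smul (hG : IsUnit G.det) (C : Matrix n n 𝕜) :
    HasDerivAt (fun a : 𝕜 => (G + a • C)⁻¹) (-(G⁻¹ * C * G⁻¹)) 0 := by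
  -- The uniformity of the operator norm is not reducibly the product one, so instance search
  -- does not see that the normed ring of matrices is complete.
  have := @instHasSummableGeomSeriesOfCompleteSpace _ _
    (FiniteDimensional.complete 𝕜 (Matrix n n 𝕜))
  obtain ⟨u, rfl⟩ := (isUnit_iff_isUnit_det G).mpr hG
  have hline := ((hasDerivAt_id' (0 : 𝕜)).smul_const C).const_add (u : Matrix n n 𝕜)
  have key := (hasFDerivAt_ringInverse (𝕜 := 𝕜) u).comp_hasDerivAt_of_eq 0 hline (by simp)
  simp only [nonsing_inv_eq_ringInverse, Ring.inverse_unit]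
  rw [_root_.neg_apply, ContinuousLinearMap.mulLeftRight_apply, one_smul] at key
  exact key

theorem hasDerivAt_inv_add_smul_mul_add_smul (hG : IsUnit G.det) (C K D : Matrix n n 𝕜) :
    HasDerivAt (fun a : 𝕜 => (G + a • C)⁻¹ * (K + a • D))
      (-(G⁻¹ * C * G⁻¹) * K + G⁻¹ * D) 0 := by
  have hK := ((hasDerivAt_id' (0 : 𝕜)).smul_const D).const_add K
  rw [one_smul] at hK
  exact ((hasDerivAt_inv_add_smul hG C).fun_mul hK).congr_deriv (by simp)

theorem hasDerivAt_momentum_add_smul (hG : IsUnit G.det) (C K D : Matrix n n 𝕜) :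
    HasDerivAt (fun a : 𝕜 => momentum (G + a • C) (K + a • D))
      (-(G⁻¹ * C * G⁻¹) * K * G⁻¹ + G⁻¹ * D * G⁻¹ + G⁻¹ * K * -(G⁻¹ * C * G⁻¹) -
        ((-(G⁻¹ * C * G⁻¹) * K + G⁻¹ * D).trace • G⁻¹ +
          (G⁻¹ * K).trace • -(G⁻¹ * C * G⁻¹))) 0 := by
  have hprod := hasDerivAt_inv_add_smul_mul_add_smul hG C K D
  have hinv := hasDerivAt_inv_add_smul hG C
  exact ((hprod.fun_mul hinv).fun_sub (hprod.matrix_trace.fun_smul hinv)).congr_deriv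
    (by simp [add_comm, add_mul])

end LineDerivatives

variable {g : Fin 3 → 𝕜} (k : Fin 3 → 𝕜) (c d : 𝕜)

theorem hasDerivAt_trace_inv_mul_diagonal_add_smul (hg : ∀ i, g i ≠ 0) :
    HasDerivAt (fun a : 𝕜 => ((diagonal g + a • !![0, 0, c; 0, 0, 0; c, 0, 0])⁻¹ *
      (diagonal k + a • !![0, 0, d; 0, 0, 0; d, 0, 0])).trace) 0 0 := by
  refine (hasDerivAt_inv_add_smul_mul_add_smul (isUnit_det_diagonal hg) _ _ _).matrix_trace
    |>.congr_deriv ?_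
  simp [inv_diagonal_of_ne_zero hg, trace_fin_three, Matrix.mul_apply, Fin.sum_univ_three]

theorem hasDerivAt_momentum_diagonal_add_smul_apply_zero_two (hg : ∀ i, g i ≠ 0) :
    HasDerivAt (fun a : 𝕜 => momentum (diagonal g + a • !![0, 0, c; 0, 0, 0; c, 0, 0])
      (diagonal k + a • !![0, 0, d; 0, 0, 0; d, 0, 0]) 0 2)
      ((d + c * k 1 / g 1) / (g 0 * g 2)) 0 := by
  refine (hasDerivAt_momentum_add_smul (isUnit_det_diagonal hg) _ _ _).matrix_apply 0 2
    |>.congr_deriv ?_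
  simp only [inv_diagonal_of_ne_zero hg, neg_mul, diagonal_mul_diagonal, Pi.inv_apply, mul_neg,
    trace_add, trace_neg, trace_fin_three, Fin.isValue, mul_apply, of_apply, cons_val',
    cons_val_fin_one, Fin.sum_univ_three, diagonal_apply_eq, cons_val_zero, ne_eq, zero_ne_one,
    not_false_eq_true, diagonal_apply_ne, cons_val_one, zero_mul, add_zero, Fin.reduceEq, cons_val,
    mul_zero, zero_add, one_ne_zero, Finset.sum_const_zero, neg_zero, zero_smul, trace_diagonal,
    smul_neg, sub_apply, add_apply, neg_apply, smul_apply, smul_eq_mul, sub_neg_eq_add]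
  field_simp [hg 0, hg 1, hg 2]
  ring

end Matrix

theorem stmt_4_general (m r₀ θ : ℝ) (hr₀ : 0 < r₀) (hr₀' : r₀ < 2 * m)
    (hθ : 0 < θ) (hθ' : θ < π) :
    let Cg : Matrix (Fin 3) (Fin 3) ℝ :=
      !![0, 0, -2 * m * r₀⁻¹ * Real.sin θ ^ 2;
         0, 0, 0;
         -2 * m * r₀⁻¹ * Real.sin θ ^ 2, 0, 0]
    let Ck : Matrix (Fin 3) (Fin 3) ℝ :=
      !![0, 0, -m * r₀⁻¹ ^ 2 * Real.sin θ ^ 2 * Real.sqrt (2 * m / r₀ - 1);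
         0, 0, 0;
         -m * r₀⁻¹ ^ 2 * Real.sin θ ^ 2 * Real.sqrt (2 * m / r₀ - 1), 0, 0]
    let g : ℝ → Matrix (Fin 3) (Fin 3) ℝ := fun a =>
      Matrix.diagonal ![2 * m / r₀ - 1, r₀ ^ 2, r₀ ^ 2 * Real.sin θ ^ 2] + a • Cg
    let k : ℝ → Matrix (Fin 3) (Fin 3) ℝ := fun a =>
      Matrix.diagonal ![m * r₀⁻¹ ^ 2 * Real.sqrt (2 * m / r₀ - 1),
        -r₀ * Real.sqrt (2 * m / r₀ - 1),
        -r₀ * Real.sin θ ^ 2 * Real.sqrt (2 * m / r₀ - 1)] + a • Ck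
    let πm : ℝ → Matrix (Fin 3) (Fin 3) ℝ := fun a =>
      (g a)⁻¹ * k a * (g a)⁻¹ - Matrix.trace ((g a)⁻¹ * k a) • (g a)⁻¹
    HasDerivAt (fun a => Matrix.trace ((g a)⁻¹ * k a)) 0 0 ∧
      HasDerivAt (fun a => πm a 0 2)
        (m * r₀⁻¹ ^ 4 * (Real.sqrt (2 * m / r₀ - 1))⁻¹) 0 := by
  intro Cg Ck g k πm
  have hlapse : 0 < 2 * m / r₀ - 1 := by
    rw [sub_pos, lt_div_iff₀ hr₀]
    linarith
  have hsin : Real.sin θ ≠ 0 := (Real.sin_pos_of_pos_of_lt_pi hθ hθ').ne'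
  have hg : ∀ i, ![2 * m / r₀ - 1, r₀ ^ 2, r₀ ^ 2 * Real.sin θ ^ 2] i ≠ 0 := by
    intro i
    fin_cases i <;> simp [hlapse.ne', hr₀.ne', hsin]
  refine ⟨hasDerivAt_trace_inv_mul_diagonal_add_smul _ _ _ hg,
    (hasDerivAt_momentum_diagonal_add_smul_apply_zero_two _ _ _ hg).congr_deriv ?_⟩
  have hsqrt := Real.sq_sqrt hlapse.le
  have hsqrt_ne : Real.sqrt (2 * m / r₀ - 1) ≠ 0 := (Real.sqrt_pos.mpr hlapse).ne'
  generalize Real.sqrt (2 * m / r₀ - 1) = x at hsqrt hsqrt_ne ⊢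
  simp only [Matrix.cons_val]
  rw [← hsqrt]
  field_simp
  ring

/-- First-order (in the Kerr angular momentum parameter `a`) behaviour of the slice data:
with `g(a) = ḡ_m + a·C_g`, `k(a) = k̄_m + a·C_k` and
`π(a) = g(a)⁻¹k(a)g(a)⁻¹ − tr(g(a)⁻¹k(a))·g(a)⁻¹`, the trace `tr(g(a)⁻¹k(a))` has
derivative `0` at `a = 0`, and the `(t,φ)` entry of `π(a)` has derivative
`m·r₀⁻⁴·(2m/r₀−1)^{−1/2}` at `a = 0`, independently of `θ`. -/
theorem stmt_4 (m r₀ θ : ℝ) (hm : 0 < m) (hr₀ : 0 < r₀) (hr₀' : r₀ < 2 * m)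
    (hθ : 0 < θ) (hθ' : θ < π) :
    let Cg : Matrix (Fin 3) (Fin 3) ℝ :=
      !![0, 0, -2 * m * r₀⁻¹ * Real.sin θ ^ 2;
         0, 0, 0;
         -2 * m * r₀⁻¹ * Real.sin θ ^ 2, 0, 0]
    let Ck : Matrix (Fin 3) (Fin 3) ℝ :=
      !![0, 0, -m * r₀⁻¹ ^ 2 * Real.sin θ ^ 2 * Real.sqrt (2 * m / r₀ - 1);
         0, 0, 0;
         -m * r₀⁻¹ ^ 2 * Real.sin θ ^ 2 * Real.sqrt (2 * m / r₀ - 1), 0, 0]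
    let g : ℝ → Matrix (Fin 3) (Fin 3) ℝ := fun a =>
      Matrix.diagonal ![2 * m / r₀ - 1, r₀ ^ 2, r₀ ^ 2 * Real.sin θ ^ 2] + a • Cg
    let k : ℝ → Matrix (Fin 3) (Fin 3) ℝ := fun a =>
      Matrix.diagonal ![m * r₀⁻¹ ^ 2 * Real.sqrt (2 * m / r₀ - 1),
        -r₀ * Real.sqrt (2 * m / r₀ - 1),
        -r₀ * Real.sin θ ^ 2 * Real.sqrt (2 * m / r₀ - 1)] + a • Ck
    let πm : ℝ → Matrix (Fin 3) (Fin 3) ℝ := fun a =>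
      (g a)⁻¹ * k a * (g a)⁻¹ - Matrix.trace ((g a)⁻¹ * k a) • (g a)⁻¹
    HasDerivAt (fun a => Matrix.trace ((g a)⁻¹ * k a)) 0 0 ∧
      HasDerivAt (fun a => πm a 0 2)
        (m * r₀⁻¹ ^ 4 * (Real.sqrt (2 * m / r₀ - 1))⁻¹) 0 :=
  stmt_4_general m r₀ θ hr₀ hr₀' hθ hθ'
end

section
/- Let m₀ > 0 and 0 < r₀ < 2m₀. With g(a), k(a), π(a) defined as the first-order Kerr slice data (for the mass m = m₀): g(a) = diag(2m₀/r₀ − 1, r₀², r₀² sin²θ) + a·C_g and k(a) = diag(m₀ r₀⁻²(2m₀/r₀−1)^{1/2}, −r₀(2m₀/r₀−1)^{1/2}, −r₀ sin²θ (2m₀/r₀−1)^{1/2}) + a·C_k, where C_g (resp. C_k) is the symmetric 3×3 matrix whose only nonzero entries are the (1,3) and (3,1) entries −2m₀ r₀⁻¹ sin²θ (resp. −m₀ r₀⁻² sin²θ (2m₀/r₀−1)^{1/2}), and π(a) = g(a)⁻¹ k(a) g(a)⁻¹ − tr(g(a)⁻¹ k(a))·g(a)⁻¹, define for a near 0: G(a)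 = ∫₀^{2π} ∫₀^π [ (π(a))₁₃ · (2m₀/r₀ − 1)^{1/2} · r₀² sin²θ + 2r₀⁻¹(2m₀/r₀ − 1)^{−1/2} · (r₀² sin²θ)⁻¹ · (−2m₀ a r₀⁻¹ sin²θ) · (2m₀/r₀ − 1)^{1/2} · r₀² sin²θ ] · r₀² sin θ dθ dφ. Then G is differentiable at a = 0 with G′(0) = −8π m₀. -/
/-!
The metric `g(a)` couples only the `r` and `φ` directions, so its inverse and the entry `π¹³` of
the conjugate momentum are explicit: for `xz`-block matrices `π¹³ = (β + q δ / d) / det`, with the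
`xz`-minor `det = (2m/r - 1) r² sin²θ (1 - c a² sin²θ)`, `c = 4m² / ((2m - r) r³)`. The integrand
of `G` then collapses exactly to `m a sin³θ ((1 - c a² sin²θ)⁻¹ - 4)` for small `a`, which is `a`
times a function continuous in `a`; the slope at `0` is its value at `a = 0`, namely
`-3m ∫₀^π sin³θ dθ = -4m`, and the `φ`-integral contributes the factor `2π`.
-/

open Real Matrix Filter Topology

theorem hasDerivAt_sub_smul_of_continuousAt {𝕜 E : Type*} [NontriviallyNormedField 𝕜]
    [NormedAddCommGroup E] [NormedSpace 𝕜 E] {H : 𝕜 → E} {x : 𝕜} (hH : ContinuousAt H x) :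
    HasDerivAt (fun y => (y - x) • H y) (H x) x := by
  rw [hasDerivAt_iff_tendsto_slope]
  refine (hH.tendsto.mono_left nhdsWithin_le_nhds).congr' ?_
  filter_upwards [self_mem_nhdsWithin] with y hy
  rw [slope_def_module, sub_self, zero_smul, sub_zero, smul_smul,
    inv_mul_cancel₀ (sub_ne_zero.2 hy), one_smul]

theorem one_sub_mul_sq_mul_sin_sq_pos {c a : ℝ} (h : |c| * a ^ 2 < 1) (θ : ℝ) :
    0 < 1 - c * a ^ 2 * sin θ ^ 2 := by
  have : c * a ^ 2 * sin θ ^ 2 ≤ |c| * a ^ 2 :=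
    calc c * a ^ 2 * sin θ ^ 2 ≤ |c| * a ^ 2 * sin θ ^ 2 := by gcongr; exact le_abs_self c
      _ ≤ |c| * a ^ 2 := mul_le_of_le_one_right (by positivity) (sin_sq_le_one θ)
  linarith

theorem abs_mul_sq_lt_one_mem_nhds (c : ℝ) : {a : ℝ | |c| * a ^ 2 < 1} ∈ 𝓝 0 :=
  (isOpen_lt (by fun_prop) continuous_const).mem_nhds (by simp)

theorem continuousOn_integral_sin_pow_three_mul (c m : ℝ) :
    ContinuousOn (fun a => ∫ θ in (0 : ℝ)..π, m * sin θ ^ 3 * ((1 - c * a ^ 2 * sin θ ^ 2)⁻¹ - 4))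
      {a | |c| * a ^ 2 < 1} := by
  rw [continuousOn_iff_continuous_domRestrict]
  refine intervalIntegral.continuous_parametric_intervalIntegral_of_continuous' ?_ 0 π
  have hden (x : {a : ℝ | |c| * a ^ 2 < 1} × ℝ) : 1 - c * (x.1 : ℝ) ^ 2 * sin x.2 ^ 2 ≠ 0 :=
    (one_sub_mul_sq_mul_sin_sq_pos x.1.2 x.2).ne'
  exact (by fun_prop : Continuous _).mul
    (((by fun_prop : Continuous _).inv₀ hden).sub (by fun_prop))

theorem hasDerivAt_integral_mul_sin_pow_three (c m : ℝ) :
    HasDerivAt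
      (fun a => ∫ θ in (0 : ℝ)..π, a * (m * sin θ ^ 3 * ((1 - c * a ^ 2 * sin θ ^ 2)⁻¹ - 4)))
      (-4 * m) 0 := by
  have := hasDerivAt_sub_smul_of_continuousAt
    ((continuousOn_integral_sin_pow_three_mul c m).continuousAt (abs_mul_sq_lt_one_mem_nhds c))
  simp only [sub_zero, smul_eq_mul, ← intervalIntegral.integral_const_mul] at this
  refine this.congr_deriv ?_
  simp only [ne_eq, OfNat.ofNat_ne_zero, not_false_eq_true, zero_pow, mul_zero, zero_mul, sub_zero,
    inv_one, intervalIntegral.integral_mul_const, intervalIntegral.integral_const_mul,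
    integral_sin_pow_three, cos_zero, cos_pi, sub_neg_eq_add, one_pow, neg_mul]
  ring

theorem inv_fin_three_xz_block {K : Type*} [Field K] {p q w d : K}
    (hD : p * w - q ^ 2 ≠ 0) (hd : d ≠ 0) :
    (!![p, 0, q; 0, d, 0; q, 0, w])⁻¹ =
      !![w / (p * w - q ^ 2), 0, -q / (p * w - q ^ 2); 0, d⁻¹, 0;
        -q / (p * w - q ^ 2), 0, p / (p * w - q ^ 2)] := by
  refine Matrix.inv_eq_right_inv ?_
  ext i j
  fin_cases i <;> fin_cases j <;> simp [Matrix.mul_apply, Fin.sum_univ_three] <;> field_simp <;>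
    ring

noncomputable def conjugateMomentum {n K : Type*} [Fintype n] [DecidableEq n] [Field K]
    (g k : Matrix n n K) : Matrix n n K :=
  g⁻¹ * k * g⁻¹ - trace (g⁻¹ * k) • g⁻¹

theorem conjugateMomentum_xz_block_zero_two {K : Type*} [Field K] {p q w d : K} (α β γ δ : K)
    (hD : p * w - q ^ 2 ≠ 0) (hd : d ≠ 0) :
    conjugateMomentum !![p, 0, q; 0, d, 0; q, 0, w] !![α, 0, β; 0, δ, 0; β, 0, γ] 0 2 =
      (β + q * δ / d) / (p * w - q ^ 2) := by
  rw [conjugateMomentum, inv_fin_three_xz_block hD hd]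
  simp only [cons_mul, Nat.succ_eq_add_one, Nat.reduceAdd, vecMul_cons, head_cons, smul_cons,
    smul_eq_mul, mul_zero, smul_empty, tail_cons, zero_smul, empty_vecMul, add_zero, zero_add,
    add_cons, empty_add_empty, empty_mul, Equiv.symm_apply_apply, trace_fin_three, Fin.isValue,
    of_apply, cons_val', cons_val_zero, cons_val_fin_one, cons_val_one, cons_val, smul_of,
    Matrix.sub_apply]
  generalize hDdef : p * w - q ^ 2 = D at hD ⊢
  field_simp
  rw [← hDdef]
  ring

noncomputable def kerrSliceMetric (m r a θ : ℝ) : Matrix (Fin 3) (Fin 3) ℝ :=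
  diagonal ![2 * m / r - 1, r ^ 2, r ^ 2 * sin θ ^ 2] +
    a • !![0, 0, -2 * m * r⁻¹ * sin θ ^ 2; 0, 0, 0; -2 * m * r⁻¹ * sin θ ^ 2, 0, 0]

noncomputable def kerrSliceSecondFundamentalForm (m r a θ : ℝ) : Matrix (Fin 3) (Fin 3) ℝ :=
  diagonal ![m * r⁻¹ ^ 2 * √(2 * m / r - 1), -r * √(2 * m / r - 1),
      -r * sin θ ^ 2 * √(2 * m / r - 1)] +
    a • !![0, 0, -m * r⁻¹ ^ 2 * sin θ ^ 2 * √(2 * m / r - 1); 0, 0, 0;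
      -m * r⁻¹ ^ 2 * sin θ ^ 2 * √(2 * m / r - 1), 0, 0]

noncomputable def angularMomentumIntegrand (m r a θ : ℝ) : ℝ :=
  (conjugateMomentum (kerrSliceMetric m r a θ) (kerrSliceSecondFundamentalForm m r a θ) 0 2 *
        √(2 * m / r - 1) * r ^ 2 * sin θ ^ 2 +
      2 * r⁻¹ * (√(2 * m / r - 1))⁻¹ * (r ^ 2 * sin θ ^ 2)⁻¹ * (-2 * m * a * r⁻¹ * sin θ ^ 2) *
        √(2 * m / r - 1) * (r ^ 2 * sin θ ^ 2)) *
    (r ^ 2 * sin θ)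

theorem kerrSliceMetric_eq (m r a θ : ℝ) :
    kerrSliceMetric m r a θ =
      !![2 * m / r - 1, 0, a * (-2 * m * r⁻¹ * sin θ ^ 2); 0, r ^ 2, 0;
        a * (-2 * m * r⁻¹ * sin θ ^ 2), 0, r ^ 2 * sin θ ^ 2] := by
  ext i j
  fin_cases i <;> fin_cases j <;> simp [kerrSliceMetric]

theorem kerrSliceSecondFundamentalForm_eq (m r a θ : ℝ) :
    kerrSliceSecondFundamentalForm m r a θ =
      !![m * r⁻¹ ^ 2 * √(2 * m / r - 1), 0, a * (-m * r⁻¹ ^ 2 * sin θ ^ 2 * √(2 * m / r - 1));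
        0, -r * √(2 * m / r - 1), 0;
        a * (-m * r⁻¹ ^ 2 * sin θ ^ 2 * √(2 * m / r - 1)), 0,
          -r * sin θ ^ 2 * √(2 * m / r - 1)] := by
  ext i j
  fin_cases i <;> fin_cases j <;> simp [kerrSliceSecondFundamentalForm]

theorem angularMomentumIntegrand_eq {m r a θ : ℝ} (hr : 0 < r) (hr' : r < 2 * m)
    (h : 1 - 4 * m ^ 2 / ((2 * m - r) * r ^ 3) * a ^ 2 * sin θ ^ 2 ≠ 0) :
    angularMomentumIntegrand m r a θ =
      a * (m * sin θ ^ 3 *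
        ((1 - 4 * m ^ 2 / ((2 * m - r) * r ^ 3) * a ^ 2 * sin θ ^ 2)⁻¹ - 4)) := by
  by_cases hS : sin θ = 0
  -- at the poles `g` is singular, but the area factor `r ^ 2 * sin θ` kills the integrand
  · simp [angularMomentumIntegrand, hS]
  have hlapse : 0 < 2 * m / r - 1 := by rw [sub_pos, one_lt_div hr]; linarith
  have hs : √(2 * m / r - 1) ^ 2 = 2 * m / r - 1 := sq_sqrt hlapse.le
  have hD : (2 * m / r - 1) * (r ^ 2 * sin θ ^ 2) - (a * (-2 * m * r⁻¹ * sin θ ^ 2)) ^ 2 =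
      (2 * m / r - 1) * r ^ 2 * sin θ ^ 2 *
        (1 - 4 * m ^ 2 / ((2 * m - r) * r ^ 3) * a ^ 2 * sin θ ^ 2) := by
    have : 2 * m - r ≠ 0 := by linarith
    field_simp
    ring
  rw [angularMomentumIntegrand, kerrSliceMetric_eq, kerrSliceSecondFundamentalForm_eq,
    conjugateMomentum_xz_block_zero_two _ _ _ _ (by rw [hD]; positivity) (by positivity), hD]
  have hs0 : √(2 * m / r - 1) ≠ 0 := by positivity
  generalize √(2 * m / r - 1) = s at hs hs0 ⊢
  generalize 1 - 4 * m ^ 2 / ((2 * m - r) * r ^ 3) * a ^ 2 * sin θ ^ 2 = E at h ⊢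
  rw [← hs]
  field_simp
  ring

theorem stmt_6_general (m₀ r₀ : ℝ) (hr₀ : 0 < r₀) (hr₀' : r₀ < 2 * m₀) :
    HasDerivAt (fun a : ℝ =>
      ∫ _φ in (0 : ℝ)..(2 * π), ∫ θ in (0 : ℝ)..π,
        (let g : Matrix (Fin 3) (Fin 3) ℝ :=
          Matrix.diagonal ![2 * m₀ / r₀ - 1, r₀ ^ 2, r₀ ^ 2 * Real.sin θ ^ 2] +
            a • !![0, 0, -2 * m₀ * r₀⁻¹ * Real.sin θ ^ 2;
                   0, 0, 0;
                   -2 * m₀ * r₀⁻¹ * Real.sin θ ^ 2, 0, 0]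
        let k : Matrix (Fin 3) (Fin 3) ℝ :=
          Matrix.diagonal ![m₀ * r₀⁻¹ ^ 2 * Real.sqrt (2 * m₀ / r₀ - 1),
              -r₀ * Real.sqrt (2 * m₀ / r₀ - 1),
              -r₀ * Real.sin θ ^ 2 * Real.sqrt (2 * m₀ / r₀ - 1)] +
            a • !![0, 0, -m₀ * r₀⁻¹ ^ 2 * Real.sin θ ^ 2 * Real.sqrt (2 * m₀ / r₀ - 1);
                   0, 0, 0;
                   -m₀ * r₀⁻¹ ^ 2 * Real.sin θ ^ 2 * Real.sqrt (2 * m₀ / r₀ - 1), 0, 0]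
        let πa : Matrix (Fin 3) (Fin 3) ℝ :=
          g⁻¹ * k * g⁻¹ - Matrix.trace (g⁻¹ * k) • g⁻¹
        (πa 0 2 * Real.sqrt (2 * m₀ / r₀ - 1) * r₀ ^ 2 * Real.sin θ ^ 2 +
            2 * r₀⁻¹ * (Real.sqrt (2 * m₀ / r₀ - 1))⁻¹ * (r₀ ^ 2 * Real.sin θ ^ 2)⁻¹ *
              (-2 * m₀ * a * r₀⁻¹ * Real.sin θ ^ 2) * Real.sqrt (2 * m₀ / r₀ - 1) *
              (r₀ ^ 2 * Real.sin θ ^ 2)) *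
          (r₀ ^ 2 * Real.sin θ)))
      (-8 * π * m₀) 0 := by
  show HasDerivAt
    (fun a => ∫ _φ in (0 : ℝ)..(2 * π), ∫ θ in (0 : ℝ)..π, angularMomentumIntegrand m₀ r₀ a θ)
    (-8 * π * m₀) 0
  simp only [intervalIntegral.integral_const, sub_zero, smul_eq_mul]
  set c := 4 * m₀ ^ 2 / ((2 * m₀ - r₀) * r₀ ^ 3)
  have hclosed : (fun a => ∫ θ in (0 : ℝ)..π, angularMomentumIntegrand m₀ r₀ a θ) =ᶠ[𝓝 0]
      fun a => ∫ θ in (0 : ℝ)..π, a * (m₀ * sin θ ^ 3 * ((1 - c * a ^ 2 * sin θ ^ 2)⁻¹ - 4)) := by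
    filter_upwards [abs_mul_sq_lt_one_mem_nhds c] with a ha
    exact intervalIntegral.integral_congr fun θ _ =>
      angularMomentumIntegrand_eq hr₀ hr₀' (one_sub_mul_sq_mul_sin_sq_pos ha θ).ne'
  exact (((hasDerivAt_integral_mul_sin_pow_three c m₀).congr_of_eventuallyEq hclosed).const_mul
    (2 * π)).congr_deriv (by ring)

/-- The leading part `G(a)` of the pairing `𝓘₃` against the rotation Killing field `∂_φ`,
computed over the sphere `{t = t₂}` of the slice `r = r₀` inside the Schwarzschild black
hole of mass `m₀`, is differentiable at `a = 0` with `G′(0) = −8πm₀`. -/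
theorem stmt_6 (m₀ r₀ : ℝ) (hm₀ : 0 < m₀) (hr₀ : 0 < r₀) (hr₀' : r₀ < 2 * m₀) :
    HasDerivAt (fun a : ℝ =>
      ∫ _φ in (0 : ℝ)..(2 * π), ∫ θ in (0 : ℝ)..π,
        (let g : Matrix (Fin 3) (Fin 3) ℝ :=
          Matrix.diagonal ![2 * m₀ / r₀ - 1, r₀ ^ 2, r₀ ^ 2 * Real.sin θ ^ 2] +
            a • !![0, 0, -2 * m₀ * r₀⁻¹ * Real.sin θ ^ 2;
                   0, 0, 0;
                   -2 * m₀ * r₀⁻¹ * Real.sin θ ^ 2, 0, 0]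
        let k : Matrix (Fin 3) (Fin 3) ℝ :=
          Matrix.diagonal ![m₀ * r₀⁻¹ ^ 2 * Real.sqrt (2 * m₀ / r₀ - 1),
              -r₀ * Real.sqrt (2 * m₀ / r₀ - 1),
              -r₀ * Real.sin θ ^ 2 * Real.sqrt (2 * m₀ / r₀ - 1)] +
            a • !![0, 0, -m₀ * r₀⁻¹ ^ 2 * Real.sin θ ^ 2 * Real.sqrt (2 * m₀ / r₀ - 1);
                   0, 0, 0;
                   -m₀ * r₀⁻¹ ^ 2 * Real.sin θ ^ 2 * Real.sqrt (2 * m₀ / r₀ - 1), 0, 0]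
        let πa : Matrix (Fin 3) (Fin 3) ℝ :=
          g⁻¹ * k * g⁻¹ - Matrix.trace (g⁻¹ * k) • g⁻¹
        (πa 0 2 * Real.sqrt (2 * m₀ / r₀ - 1) * r₀ ^ 2 * Real.sin θ ^ 2 +
            2 * r₀⁻¹ * (Real.sqrt (2 * m₀ / r₀ - 1))⁻¹ * (r₀ ^ 2 * Real.sin θ ^ 2)⁻¹ *
              (-2 * m₀ * a * r₀⁻¹ * Real.sin θ ^ 2) * Real.sqrt (2 * m₀ / r₀ - 1) *
              (r₀ ^ 2 * Real.sin θ ^ 2)) *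
          (r₀ ^ 2 * Real.sin θ)))
      (-8 * π * m₀) 0 :=
  stmt_6_general m₀ r₀ hr₀ hr₀'
end
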